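/- With G ≺ H, 𝒜, ℬ as in the combinatorial set-up, an ultrafilter q ∈ S(ℬ) is a weak coheir over 𝒜 if and only if r(q*s) = r(q)*r(s) for every s ∈ S(ℬ). -/

import Mathlib

open Set

/-- Left translate of a set: $hA = \{h·a : a ∈ A\}$. -/
def trL {H : Type*} [Group H] (h : H) (A : Set H) : Set H := (fun x => h * x) '' A

/-- A Boolean algebra of subsets of $T ⊆ H$ closed under left translation by elements
of $T$ (complements are taken relative to $T$). -/
def IsAlgOn {H : Type*} [Group H] (T : Set H) (𝒜 : Set (Set H)) : Prop :=
  (∀ A ∈ 𝒜, A ⊆ T) ∧ ∅ ∈ 𝒜 ∧ T ∈ 𝒜 ∧ (∀ A ∈ 𝒜, T \ A ∈ 𝒜) ∧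
    (∀ A ∈ 𝒜, ∀ B ∈ 𝒜, A ∪ B ∈ 𝒜) ∧ ∀ g ∈ T, ∀ A ∈ 𝒜, trL g A ∈ 𝒜

/-- An ultrafilter on the algebra 𝒜 of subsets of $T$. -/
def IsUltraOn {H : Type*} [Group H] (T : Set H) (𝒜 p : Set (Set H)) : Prop :=
  p ⊆ 𝒜 ∧ ∅ ∉ p ∧ T ∈ p ∧ (∀ A ∈ p, ∀ B ∈ p, A ∩ B ∈ p) ∧
    (∀ A ∈ p, ∀ B ∈ 𝒜, A ⊆ B → B ∈ p) ∧ ∀ A ∈ 𝒜, A ∈ p ∨ T \ A ∈ p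

/-- The map $d_p(A) = \{g ∈ T : g⁻¹A ∈ p\}$. -/
def dmap {H : Type*} [Group H] (T : Set H) (p : Set (Set H)) (A : Set H) : Set H :=
  {g : H | g ∈ T ∧ trL g⁻¹ A ∈ p}

/-- 𝒜 is d-closed. -/
def DClosedOn {H : Type*} [Group H] (T : Set H) (𝒜 : Set (Set H)) : Prop :=
  ∀ p : Set (Set H), IsUltraOn T 𝒜 p → ∀ A ∈ 𝒜, dmap T p A ∈ 𝒜

/-- The semigroup operation on ultrafilters: $A ∈ p*q$ iff $A ∈ 𝒜$ and $d_q(A) ∈ p$. -/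
def ustar {H : Type*} [Group H] (T : Set H) (𝒜 p q : Set (Set H)) : Set (Set H) :=
  {A | A ∈ 𝒜 ∧ dmap T q A ∈ p}

/-- The combinatorial set-up: $G ≺ H$ groups, 𝒜 a d-closed $G$-algebra of subsets of
$G$, ℬ a d-closed $H$-algebra of subsets of $H$, and a Boolean monomorphism
$A ↦ A^\#$ from 𝒜 to ℬ respecting left translation by elements of $G$, with
$A^\# ∩ G = A$ and $ℬ|_G = 𝒜$.  The field `elem` records the combinatorial content
of the elementarity $G ≺ H$: a set of 𝒜 whose $\#$-extension is nonempty is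
itself nonempty. -/
structure CombSetup (H : Type*) [Group H] where
  G : Subgroup H
  𝒜 : Set (Set H)
  ℬ : Set (Set H)
  sharp : Set H → Set H
  alg𝒜 : IsAlgOn (G : Set H) 𝒜
  algℬ : IsAlgOn (univ : Set H) ℬ
  dclosed𝒜 : DClosedOn (G : Set H) 𝒜
  dclosedℬ : DClosedOn (univ : Set H) ℬ
  sharp_mem : ∀ A ∈ 𝒜, sharp A ∈ ℬ
  sharp_inter : ∀ A ∈ 𝒜, sharp A ∩ (G : Set H) = A
  sharp_empty : sharp ∅ = ∅
  sharp_union : ∀ A ∈ 𝒜, ∀ B ∈ 𝒜, sharp (A ∪ B) = sharp A ∪ sharp B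
  sharp_compl : ∀ A ∈ 𝒜, sharp ((G : Set H) \ A) = (sharp A)ᶜ
  sharp_trans : ∀ g ∈ G, ∀ A ∈ 𝒜, sharp (trL g A) = trL g (sharp A)
  restrict_mem : ∀ B ∈ ℬ, B ∩ (G : Set H) ∈ 𝒜
  elem : ∀ A ∈ 𝒜, (sharp A).Nonempty → A.Nonempty

variable {H : Type*} [Group H]

/-- The restriction map $r : S(ℬ) → S(𝒜)$, $r(q) = \{A ∈ 𝒜 : A^\# ∈ q\}$. -/
def CombSetup.res (C : CombSetup H) (q : Set (Set H)) : Set (Set H) :=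
  {A | A ∈ C.𝒜 ∧ C.sharp A ∈ q}

/-- $q ∈ S(ℬ)$ is a weak heir of $p ∈ S(𝒜)$: $d_q(A^\#) = (d_p A)^\#$ for all $A ∈ 𝒜$. -/
def CombSetup.IsWeakHeir (C : CombSetup H) (q p : Set (Set H)) : Prop :=
  IsUltraOn (univ : Set H) C.ℬ q ∧ IsUltraOn (C.G : Set H) C.𝒜 p ∧
    ∀ A ∈ C.𝒜, dmap (univ : Set H) q (C.sharp A) = C.sharp (dmap (C.G : Set H) p A)

/-- $q ∈ S(ℬ)$ is a weak coheir of $p ∈ S(𝒜)$: for every $A ∈ 𝒜$ and $s ∈ S(ℬ)$,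
$d_s(A^\#) ∈ q ↔ d_s(A^\#) ∩ G ∈ p$. -/
def CombSetup.IsWeakCoheir (C : CombSetup H) (q p : Set (Set H)) : Prop :=
  IsUltraOn (univ : Set H) C.ℬ q ∧ IsUltraOn (C.G : Set H) C.𝒜 p ∧
    ∀ A ∈ C.𝒜, ∀ s : Set (Set H), IsUltraOn (univ : Set H) C.ℬ s →
      (dmap (univ : Set H) s (C.sharp A) ∈ q ↔
        dmap (univ : Set H) s (C.sharp A) ∩ (C.G : Set H) ∈ p)

/-- The coheir extension $p^ℬ = \{B ∈ ℬ : B ∩ G ∈ p\}$. -/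
def CombSetup.coheirExt (C : CombSetup H) (p : Set (Set H)) : Set (Set H) :=
  {B | B ∈ C.ℬ ∧ B ∩ (C.G : Set H) ∈ p}

/-- $q ∈ S(ℬ)$ is a coheir over 𝒜: every set in $q$ meets $G$. -/
def CombSetup.IsCoheir (C : CombSetup H) (q : Set (Set H)) : Prop :=
  IsUltraOn (univ : Set H) C.ℬ q ∧ ∀ B ∈ q, (B ∩ (C.G : Set H)).Nonempty

/-! Because `#` commutes with translation by elements of the subgroup `G`, the map `d` commutes
with restriction: $d_{r(s)}(A) = d_s(A^\#) ∩ G$. Hence `A ∈ r(q*s)` says $d_s(A^\#) ∈ q$, while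
`A ∈ r(q)*r(s)` says $d_s(A^\#) ∩ G ∈ r(q)$, and asking these to agree for all `A` and `s` is
the weak coheir condition. -/

theorem Set.inter_eq_sdiff_union_sdiff {α : Type*} {T A B : Set α} (hA : A ⊆ T) :
    A ∩ B = T \ ((T \ A) ∪ (T \ B)) := by
  rw [← sdiff_inter, sdiff_sdiff_cancel_left (inter_subset_left.trans hA)]

theorem IsAlgOn.inter_mem {T : Set H} {𝒜 : Set (Set H)} (h : IsAlgOn T 𝒜) {A B : Set H}
    (hA : A ∈ 𝒜) (hB : B ∈ 𝒜) : A ∩ B ∈ 𝒜 := by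
  obtain ⟨hsub, -, -, hdiff, hunion, -⟩ := h
  rw [inter_eq_sdiff_union_sdiff (hsub A hA)]
  exact hdiff _ (hunion _ (hdiff A hA) _ (hdiff B hB))

namespace CombSetup

variable (C : CombSetup H) {A B : Set H}

theorem sharp_G : C.sharp C.G = univ := by
  simpa [C.sharp_empty] using C.sharp_compl ∅ C.alg𝒜.2.1

theorem sharp_inter_distrib (hA : A ∈ C.𝒜) (hB : B ∈ C.𝒜) :
    C.sharp (A ∩ B) = C.sharp A ∩ C.sharp B := by
  have hA' := C.alg𝒜.2.2.2.1 A hA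
  have hB' := C.alg𝒜.2.2.2.1 B hB
  rw [inter_eq_sdiff_union_sdiff (C.alg𝒜.1 A hA),
    C.sharp_compl _ (C.alg𝒜.2.2.2.2.1 _ hA' _ hB'), C.sharp_union _ hA' _ hB',
    C.sharp_compl _ hA, C.sharp_compl _ hB, compl_union, compl_compl, compl_compl]

theorem sharp_mono (hA : A ∈ C.𝒜) (hB : B ∈ C.𝒜) (hAB : A ⊆ B) : C.sharp A ⊆ C.sharp B := by
  rw [← union_eq_self_of_subset_left hAB, C.sharp_union A hA B hB]
  exact subset_union_left

theorem res_isUltraOn {s : Set (Set H)} (hs : IsUltraOn univ C.ℬ s) :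
    IsUltraOn C.G C.𝒜 (C.res s) := by
  obtain ⟨-, hemp, huniv, hinter, hup, hult⟩ := hs
  refine ⟨fun A hA => hA.1, ?_, ⟨C.alg𝒜.2.2.1, C.sharp_G ▸ huniv⟩, ?_, ?_, ?_⟩
  · rintro ⟨-, h⟩
    exact hemp (C.sharp_empty ▸ h)
  · rintro A ⟨hA, hAs⟩ B ⟨hB, hBs⟩
    exact ⟨C.alg𝒜.inter_mem hA hB, C.sharp_inter_distrib hA hB ▸ hinter _ hAs _ hBs⟩
  · rintro A ⟨hA, hAs⟩ B hB hAB
    exact ⟨hB, hup _ hAs _ (C.sharp_mem B hB) (C.sharp_mono hA hB hAB)⟩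
  · intro A hA
    refine (hult (C.sharp A) (C.sharp_mem A hA)).imp (fun h => ⟨hA, h⟩) fun h => ?_
    refine ⟨C.alg𝒜.2.2.2.1 A hA, ?_⟩
    rwa [C.sharp_compl A hA, compl_eq_univ_sdiff]

theorem dmap_res (s : Set (Set H)) (hA : A ∈ C.𝒜) :
    dmap C.G (C.res s) A = dmap univ s (C.sharp A) ∩ C.G := by
  ext g
  simp only [dmap, res, mem_inter_iff, mem_ofPred_eq, mem_univ, true_and]
  constructor
  · rintro ⟨hg, -, hsh⟩
    exact ⟨C.sharp_trans g⁻¹ (inv_mem hg) A hA ▸ hsh, hg⟩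
  · rintro ⟨hsh, hg⟩
    exact ⟨hg, C.alg𝒜.2.2.2.2.2 g⁻¹ (inv_mem hg) A hA,
      (C.sharp_trans g⁻¹ (inv_mem hg) A hA).symm ▸ hsh⟩

theorem mem_res_ustar_iff (q s : Set (Set H)) :
    A ∈ C.res (ustar univ C.ℬ q s) ↔ A ∈ C.𝒜 ∧ dmap univ s (C.sharp A) ∈ q :=
  and_congr_right fun hA => and_iff_right (C.sharp_mem A hA)

theorem mem_ustar_res_iff (q s : Set (Set H)) :
    A ∈ ustar C.G C.𝒜 (C.res q) (C.res s) ↔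
      A ∈ C.𝒜 ∧ dmap univ s (C.sharp A) ∩ C.G ∈ C.res q :=
  and_congr_right fun hA => by rw [C.dmap_res s hA]

end CombSetup

/-- $q ∈ S(ℬ)$ is a weak coheir over 𝒜 iff $r(q*s) = r(q)*r(s)$ for every $s ∈ S(ℬ)$. -/
theorem weakCoheir_iff_res_mul (C : CombSetup H) (q : Set (Set H))
    (hq : IsUltraOn (univ : Set H) C.ℬ q) :
    C.IsWeakCoheir q (C.res q) ↔
      ∀ s : Set (Set H), IsUltraOn (univ : Set H) C.ℬ s →
        C.res (ustar (univ : Set H) C.ℬ q s) =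
          ustar (C.G : Set H) C.𝒜 (C.res q) (C.res s) := by
  simp only [CombSetup.IsWeakCoheir, hq, C.res_isUltraOn hq, true_and, Set.ext_iff,
    C.mem_res_ustar_iff, C.mem_ustar_res_iff, and_congr_right_iff]
  exact ⟨fun h s hs A hA => h A hA s hs, fun h A hA s hs => h s hs A hA⟩
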